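/- Let S and T be the free algebra monads of algebraic theories 𝕊 and 𝕋, and let λ : ST ⇒ TS be a distributive law. Then the composite monad (TS, η^Tη^S, μ^Tμ^S ∘ TλS) is presented algebraically by the theory 𝕌^λ with signature Σ_𝕊 ⊎ Σ_𝕋 and equations E_𝕊 ∪ E_𝕋 ∪ E_λ: the free algebra monad of 𝕌^λ is isomorphic as a monad to TS, equivalently the Eilenberg–Moore category of TS is concretely isomorphic to the category of (Σ_𝕊 ⊎ Σ_𝕋, E_𝕊 ∪ E_𝕋 ∪ E_λ)-algebras. -/

import Mathlib

/-! ## Algebraic signatures, terms and equational logic -/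

/-- An algebraic signature: a set of operation symbols with arities. -/
structure Sgn where
  ops : Type
  ar : ops → ℕ

/-- Terms over a signature `σ` with variables in `X`. -/
inductive Trm (σ : Sgn) (X : Type) : Type
  | var : X → Trm σ X
  | op : (f : σ.ops) → (Fin (σ.ar f) → Trm σ X) → Trm σ X

/-- Simultaneous substitution. -/
def Trm.bind {σ : Sgn} {X Y : Type} : Trm σ X → (X → Trm σ Y) → Trm σ Y
  | .var x, g => g x
  | .op f k, g => .op f fun i => (k i).bind g

/-- Renaming of variables. -/
def Trm.rename {σ : Sgn} {X Y : Type} (f : X → Y) (t : Trm σ X) : Trm σ Y :=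
  t.bind fun x => .var (f x)

/-- Equations over `σ`: pairs of terms over the fixed countable set `ℕ` of variables. -/
abbrev Eqn (σ : Sgn) := Trm σ ℕ × Trm σ ℕ

/-- Derivability in equational logic from the set of axioms `E`
(axioms, reflexivity, symmetry, transitivity, congruence, substitution). -/
inductive Deriv {σ : Sgn} (E : Set (Eqn σ)) : {X : Type} → Trm σ X → Trm σ X → Prop
  | ax {X : Type} {e : Eqn σ} (he : e ∈ E) (g : ℕ → Trm σ X) :
      Deriv E (e.1.bind g) (e.2.bind g)
  | refl {X : Type} (t : Trm σ X) : Deriv E t t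
  | symm {X : Type} {s t : Trm σ X} : Deriv E s t → Deriv E t s
  | trans {X : Type} {s t u : Trm σ X} : Deriv E s t → Deriv E t u → Deriv E s u
  | congr {X : Type} (f : σ.ops) {k k' : Fin (σ.ar f) → Trm σ X} :
      (∀ i, Deriv E (k i) (k' i)) → Deriv E (.op f k) (.op f k')
  | subst {X Y : Type} {s t : Trm σ X} (g : X → Trm σ Y) :
      Deriv E s t → Deriv E (s.bind g) (t.bind g)

/-- An algebraic theory: a signature together with a set of equations. -/
structure Thy where
  sig : Sgn
  eqns : Set (Eqn sig)

/-! ## The free algebra monad -/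

/-- Carrier of the free algebra monad: terms modulo derivable equality. -/
def FreeM (σ : Sgn) (E : Set (Eqn σ)) (X : Type) : Type :=
  Quot (fun s t : Trm σ X => Deriv E s t)

/-- Equivalence class of a term. -/
def FreeM.mk {σ : Sgn} {E : Set (Eqn σ)} {X : Type} (t : Trm σ X) : FreeM σ E X :=
  Quot.mk _ t

/-- Functorial action of the free algebra monad. -/
noncomputable def FreeM.map {σ : Sgn} {E : Set (Eqn σ)} {X Y : Type}
    (f : X → Y) (q : FreeM σ E X) : FreeM σ E Y :=
  FreeM.mk ((Quot.out q).rename f)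

/-- Unit of the free algebra monad. -/
def FreeM.unit {σ : Sgn} {E : Set (Eqn σ)} {X : Type} (x : X) : FreeM σ E X :=
  FreeM.mk (.var x)

/-- Multiplication of the free algebra monad (flattening). -/
noncomputable def FreeM.mul {σ : Sgn} {E : Set (Eqn σ)} {X : Type}
    (q : FreeM σ E (FreeM σ E X)) : FreeM σ E X :=
  FreeM.mk ((Quot.out q).bind fun c => Quot.out c)

/-! ## Disjoint union of signatures and separated terms -/

/-- Disjoint union of two signatures. -/
def Sgn.sum (σ τ : Sgn) : Sgn := ⟨σ.ops ⊕ τ.ops, Sum.elim σ.ar τ.ar⟩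

/-- Embedding of `σ`-terms into terms over the sum signature. -/
def Trm.inl {σ τ : Sgn} {X : Type} : Trm σ X → Trm (σ.sum τ) X
  | .var x => .var x
  | .op f k => .op (Sum.inl f) fun i => (k i).inl

/-- Embedding of `τ`-terms into terms over the sum signature. -/
def Trm.inr {σ τ : Sgn} {X : Type} : Trm τ X → Trm (σ.sum τ) X
  | .var x => .var x
  | .op f k => .op (Sum.inr f) fun i => (k i).inr

/-- Flattening of a separated term `t[s_x/x]` (`τ`-term over `σ`-terms)
into a term over the sum signature. -/
def sepTS {σ τ : Sgn} {X : Type} (t : Trm τ (Trm σ X)) : Trm (σ.sum τ) X :=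
  (Trm.inr t).bind fun s => Trm.inl s

/-- Flattening of a mixed term `s[t_x/x]` (`σ`-term over `τ`-terms)
into a term over the sum signature. -/
def sepST {σ τ : Sgn} {X : Type} (s : Trm σ (Trm τ X)) : Trm (σ.sum τ) X :=
  (Trm.inl s).bind fun t => Trm.inr t

/-- The element `[t[[s_x]_𝕊/x]]_𝕋` of `TSX` determined by a separated term. -/
def clTS (SS TT : Thy) {X : Type} (t : Trm TT.sig (Trm SS.sig X)) :
    FreeM TT.sig TT.eqns (FreeM SS.sig SS.eqns X) :=
  FreeM.mk (t.rename FreeM.mk)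

/-- The element `[s[[t_x]_𝕋/x]]_𝕊` of `STX` determined by a mixed term. -/
def clST (SS TT : Thy) {X : Type} (s : Trm SS.sig (Trm TT.sig X)) :
    FreeM SS.sig SS.eqns (FreeM TT.sig TT.eqns X) :=
  FreeM.mk (s.rename FreeM.mk)

/-! ## Composite theories -/

/-- A composite theory of `TT` after `SS`: a theory on the disjoint union
of the signatures, containing both sets of equations, in which every term
has a separation, and separations are essentially unique. -/
structure Composite (SS TT : Thy) where
  eqns : Set (Eqn (SS.sig.sum TT.sig))
  containsS : ∀ e ∈ SS.eqns, ((Trm.inl e.1 : Trm (SS.sig.sum TT.sig) ℕ), Trm.inl e.2) ∈ eqns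
  containsT : ∀ e ∈ TT.eqns, ((Trm.inr e.1 : Trm (SS.sig.sum TT.sig) ℕ), Trm.inr e.2) ∈ eqns
  sepExists : ∀ u : Trm (SS.sig.sum TT.sig) ℕ,
      ∃ t : Trm TT.sig (Trm SS.sig ℕ), Deriv eqns u (sepTS t)
  sepUnique : ∀ t t' : Trm TT.sig (Trm SS.sig ℕ),
      Deriv eqns (sepTS t) (sepTS t') → clTS SS TT t = clTS SS TT t'

/-! ## Distributive laws between free algebra monads -/

/-- A distributive law `λ : ST ⇒ TS` between the free algebra monads of `SS` and `TT`. -/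
structure DistLaw (SS TT : Thy) where
  app : ∀ X : Type, FreeM SS.sig SS.eqns (FreeM TT.sig TT.eqns X) →
      FreeM TT.sig TT.eqns (FreeM SS.sig SS.eqns X)
  natural : ∀ (X Y : Type) (f : X → Y)
      (q : FreeM SS.sig SS.eqns (FreeM TT.sig TT.eqns X)),
      app Y (FreeM.map (FreeM.map f) q) = FreeM.map (FreeM.map f) (app X q)
  unitS : ∀ (X : Type) (q : FreeM TT.sig TT.eqns X),
      app X (FreeM.unit q) = FreeM.map FreeM.unit q
  unitT : ∀ (X : Type) (q : FreeM SS.sig SS.eqns X),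
      app X (FreeM.map FreeM.unit q) = FreeM.unit q
  mulS : ∀ (X : Type)
      (q : FreeM SS.sig SS.eqns (FreeM SS.sig SS.eqns (FreeM TT.sig TT.eqns X))),
      app X (FreeM.mul q) =
        FreeM.map FreeM.mul (app (FreeM SS.sig SS.eqns X) (FreeM.map (app X) q))
  mulT : ∀ (X : Type)
      (q : FreeM SS.sig SS.eqns (FreeM TT.sig TT.eqns (FreeM TT.sig TT.eqns X))),
      app X (FreeM.map FreeM.mul q) =
        FreeM.mul (FreeM.map (app X) (app (FreeM TT.sig TT.eqns X) q))

/-! ## The theory `𝕌^λ` obtained from a distributive law -/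

/-- The set `E_λ` of all equations between mixed terms and separated terms
that are related by the distributive law `λ`. -/
def Elam (SS TT : Thy) (d : DistLaw SS TT) : Set (Eqn (SS.sig.sum TT.sig)) :=
  { e | ∃ (s : Trm SS.sig (Trm TT.sig ℕ)) (t : Trm TT.sig (Trm SS.sig ℕ)),
      e = (sepST s, sepTS t) ∧ d.app ℕ (clST SS TT s) = clTS SS TT t }

/-- The equations of `𝕊`, embedded into the sum signature. -/
def embedS (SS TT : Thy) : Set (Eqn (SS.sig.sum TT.sig)) :=
  { e | ∃ e₀ ∈ SS.eqns, e = (Trm.inl e₀.1, Trm.inl e₀.2) }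

/-- The equations of `𝕋`, embedded into the sum signature. -/
def embedT (SS TT : Thy) : Set (Eqn (SS.sig.sum TT.sig)) :=
  { e | ∃ e₀ ∈ TT.eqns, e = (Trm.inr e₀.1, Trm.inr e₀.2) }

/-- The equations `E_𝕊 ∪ E_𝕋 ∪ E_λ` of the theory `𝕌^λ`. -/
def EUlam (SS TT : Thy) (d : DistLaw SS TT) : Set (Eqn (SS.sig.sum TT.sig)) :=
  embedS SS TT ∪ embedT SS TT ∪ Elam SS TT d

/-! ## Statement 10: `𝕌^λ` presents the composite monad `TS` -/

/-- The composite functor `TS`. -/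
abbrev TSobj (SS TT : Thy) (X : Type) : Type :=
  FreeM TT.sig TT.eqns (FreeM SS.sig SS.eqns X)

/-- The unit `η^T η^S` of the composite monad. -/
def etaTS (SS TT : Thy) (X : Type) (x : X) : TSobj SS TT X :=
  FreeM.unit (FreeM.unit x)

/-- The multiplication `μ^T μ^S ∘ TλS` of the composite monad induced by `λ`. -/
noncomputable def muTSd (SS TT : Thy) (d : DistLaw SS TT) (X : Type)
    (q : TSobj SS TT (TSobj SS TT X)) : TSobj SS TT X :=
  FreeM.map FreeM.mul (FreeM.mul (FreeM.map (d.app (FreeM SS.sig SS.eqns X)) q))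

section Basic

variable {σ τ : Sgn} {X Y Z : Type} {E : Set (Eqn σ)}

theorem Trm.bind_assoc (t : Trm σ X) (g : X → Trm σ Y) (h : Y → Trm σ Z) :
    (t.bind g).bind h = t.bind (fun x => (g x).bind h) := by
  induction t with
  | var x => rfl
  | op f k ih => simp only [Trm.bind]; exact congrArg _ (funext fun i => ih i)

theorem Trm.bind_var (t : Trm σ X) : t.bind (fun x => .var x) = t := by
  induction t with
  | var x => rfl
  | op f k ih => simp only [Trm.bind]; exact congrArg _ (funext fun i => ih i)

theorem Trm.rename_def (f : X → Y) (t : Trm σ X) : t.rename f = t.bind (fun x => .var (f x)) := rfl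

theorem Trm.rename_bind (f : X → Y) (g : Y → Trm σ Z) (t : Trm σ X) :
    (t.rename f).bind g = t.bind (fun x => g (f x)) := by
  rw [Trm.rename_def, Trm.bind_assoc]; rfl

theorem Trm.bind_rename (g : X → Trm σ Y) (f : Y → Z) (t : Trm σ X) :
    (t.bind g).rename f = t.bind (fun x => (g x).rename f) := by
  rw [Trm.rename_def, Trm.bind_assoc]; rfl

theorem Trm.rename_rename (f : X → Y) (g : Y → Z) (t : Trm σ X) :
    (t.rename f).rename g = t.rename (fun x => g (f x)) := by
  rw [Trm.rename_def (fun x => g (f x)), Trm.rename_def g, Trm.rename_bind]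

theorem Trm.rename_id (t : Trm σ X) : t.rename (fun x => x) = t := Trm.bind_var t

theorem Deriv.bind_congr {t : Trm σ X} {g g' : X → Trm σ Y}
    (h : ∀ x, Deriv E (g x) (g' x)) : Deriv E (t.bind g) (t.bind g') := by
  induction t with
  | var x => exact h x
  | op f k ih => exact Deriv.congr f (fun i => ih i)

theorem Deriv.bind_both {s t : Trm σ X} {g g' : X → Trm σ Y} (hst : Deriv E s t)
    (h : ∀ x, Deriv E (g x) (g' x)) : Deriv E (s.bind g) (t.bind g') :=
  (Deriv.subst g hst).trans (Deriv.bind_congr h)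

theorem derivOfEq {s t : Trm σ X} (h : FreeM.mk (E := E) s = FreeM.mk t) : Deriv E s t := by
  have h' := Quot.eqvGen_exact h
  clear h
  induction h' with
  | rel _ _ h => exact h
  | refl => exact Deriv.refl _
  | symm _ _ _ ih => exact ih.symm
  | trans _ _ _ _ _ ih1 ih2 => exact ih1.trans ih2

theorem FreeM.mk_out (q : FreeM σ E X) : FreeM.mk (Quot.out q) = q := Quot.out_eq q

theorem deriv_out (t : Trm σ X) : Deriv E (Quot.out (FreeM.mk (E := E) t)) t :=
  derivOfEq (FreeM.mk_out _)

theorem FreeM.sound {s t : Trm σ X} (h : Deriv E s t) : FreeM.mk (E := E) s = FreeM.mk t :=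
  Quot.sound h

theorem FreeM.map_mk (f : X → Y) (t : Trm σ X) :
    FreeM.map (E := E) f (FreeM.mk t) = FreeM.mk (t.rename f) := by
  exact FreeM.sound (Deriv.subst _ (deriv_out t))

theorem FreeM.mul_mk (t : Trm σ (FreeM σ E X)) :
    FreeM.mul (FreeM.mk t) = FreeM.mk (t.bind Quot.out) := by
  exact FreeM.sound (Deriv.subst _ (deriv_out t))

theorem FreeM.unit_def (x : X) : FreeM.unit (E := E) x = FreeM.mk (.var x) := rfl

theorem FreeM.map_unit (f : X → Y) (x : X) :
    FreeM.map (E := E) f (FreeM.unit x) = FreeM.unit (f x) := FreeM.map_mk f _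

theorem FreeM.mul_unit (q : FreeM σ E X) : FreeM.mul (FreeM.unit q) = q := by
  rw [FreeM.unit_def, FreeM.mul_mk]; exact FreeM.mk_out q

theorem FreeM.map_map (f : X → Y) (g : Y → Z) (q : FreeM σ E X) :
    FreeM.map g (FreeM.map f q) = FreeM.map (fun x => g (f x)) q := by
  induction q using Quot.ind with
  | _ t => show FreeM.map g (FreeM.map f (FreeM.mk t)) = FreeM.map (fun x => g (f x)) (FreeM.mk t)
           rw [FreeM.map_mk, FreeM.map_mk, FreeM.map_mk, Trm.rename_rename]

theorem FreeM.map_id (q : FreeM σ E X) : FreeM.map (fun x => x) q = q := by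
  induction q using Quot.ind with
  | _ t => show FreeM.map (fun x => x) (FreeM.mk t) = FreeM.mk t
           rw [FreeM.map_mk, Trm.rename_id]

theorem FreeM.mul_map_map (f : X → Y) (q : FreeM σ E (FreeM σ E X)) :
    FreeM.mul (FreeM.map (FreeM.map f) q) = FreeM.map f (FreeM.mul q) := by
  induction q using Quot.ind with
  | _ t =>
    show FreeM.mul (FreeM.map (FreeM.map f) (FreeM.mk t)) = FreeM.map f (FreeM.mul (FreeM.mk t))
    rw [FreeM.map_mk, FreeM.mul_mk, FreeM.mul_mk, FreeM.map_mk]; erw [Trm.rename_bind]; erw [Trm.bind_rename]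
    exact FreeM.sound (Deriv.bind_congr (fun c => derivOfEq (by
      rw [FreeM.mk_out, ← FreeM.map_mk, FreeM.mk_out])))

theorem FreeM.mul_assoc (q : FreeM σ E (FreeM σ E (FreeM σ E X))) :
    FreeM.mul (FreeM.map FreeM.mul q) = FreeM.mul (FreeM.mul q) := by
  induction q using Quot.ind with
  | _ t =>
    show FreeM.mul (FreeM.map FreeM.mul (FreeM.mk t)) = FreeM.mul (FreeM.mul (FreeM.mk t))
    rw [FreeM.map_mk, FreeM.mul_mk, FreeM.mul_mk, FreeM.mul_mk]; erw [Trm.rename_bind]; erw [Trm.bind_assoc]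
    exact FreeM.sound (Deriv.bind_congr (fun c => derivOfEq (by
      rw [FreeM.mk_out, ← FreeM.mul_mk, FreeM.mk_out])))

end Basic
section Embed

variable {σ τ : Sgn} {X Y : Type}

theorem Trm.inl_bind (t : Trm σ X) (g : X → Trm σ Y) :
    Trm.inl (τ := τ) (t.bind g) = (Trm.inl t).bind (fun x => Trm.inl (g x)) := by
  induction t with
  | var x => rfl
  | op f k ih => simp only [Trm.bind, Trm.inl]; exact congrArg _ (funext fun i => ih i)

theorem Trm.inr_bind (t : Trm τ X) (g : X → Trm τ Y) :
    Trm.inr (σ := σ) (t.bind g) = (Trm.inr t).bind (fun x => Trm.inr (g x)) := by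
  induction t with
  | var x => rfl
  | op f k ih => simp only [Trm.bind, Trm.inr]; exact congrArg _ (funext fun i => ih i)

theorem Trm.inl_rename (t : Trm σ X) (f : X → Y) :
    Trm.inl (τ := τ) (t.rename f) = (Trm.inl t).rename f := Trm.inl_bind t _

theorem Trm.inr_rename (t : Trm τ X) (f : X → Y) :
    Trm.inr (σ := σ) (t.rename f) = (Trm.inr t).rename f := Trm.inr_bind t _

variable (SS TT : Thy) (d : DistLaw SS TT)

theorem deriv_inl {s t : Trm SS.sig X} (h : Deriv SS.eqns s t) :
    Deriv (EUlam SS TT d) (Trm.inl s) (Trm.inl t) := by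
  induction h with
  | @ax X e he g =>
    rw [Trm.inl_bind, Trm.inl_bind]
    have hm : ((Trm.inl e.1, Trm.inl e.2) : Eqn (SS.sig.sum TT.sig)) ∈ EUlam SS TT d :=
      Or.inl (Or.inl ⟨e, he, rfl⟩)
    exact Deriv.ax hm _
  | refl t => exact Deriv.refl _
  | symm _ ih => exact ih.symm
  | trans _ _ ih1 ih2 => exact ih1.trans ih2
  | @congr X f k k' hk ih =>
    exact Deriv.congr (σ := SS.sig.sum TT.sig) (Sum.inl f)
      (k := fun i => (k i).inl) (k' := fun i => (k' i).inl) (fun i => ih i)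
  | subst g _ ih => rw [Trm.inl_bind, Trm.inl_bind]; exact Deriv.subst _ ih

theorem deriv_inr {s t : Trm TT.sig X} (h : Deriv TT.eqns s t) :
    Deriv (EUlam SS TT d) (Trm.inr s) (Trm.inr t) := by
  induction h with
  | @ax X e he g =>
    rw [Trm.inr_bind, Trm.inr_bind]
    have hm : ((Trm.inr e.1, Trm.inr e.2) : Eqn (SS.sig.sum TT.sig)) ∈ EUlam SS TT d :=
      Or.inl (Or.inr ⟨e, he, rfl⟩)
    exact Deriv.ax hm _
  | refl t => exact Deriv.refl _
  | symm _ ih => exact ih.symm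
  | trans _ _ ih1 ih2 => exact ih1.trans ih2
  | @congr X f k k' hk ih =>
    exact Deriv.congr (σ := SS.sig.sum TT.sig) (Sum.inr f)
      (k := fun i => (k i).inr) (k' := fun i => (k' i).inr) (fun i => ih i)
  | subst g _ ih => rw [Trm.inr_bind, Trm.inr_bind]; exact Deriv.subst _ ih

/-- Representative of a `TS`-element as a separated `τ`-over-`σ` term. -/
noncomputable def tsRep (q : TSobj SS TT X) : Trm TT.sig (Trm SS.sig X) :=
  (Quot.out q).rename (fun c => Quot.out c)

theorem clTS_tsRep (q : TSobj SS TT X) : clTS SS TT (tsRep SS TT q) = q := by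
  show FreeM.mk (((Quot.out q).rename _).rename _) = q
  erw [Trm.rename_rename]
  have : (fun x : FreeM SS.sig SS.eqns X => FreeM.mk (Quot.out x)) = fun x => x :=
    funext fun x => FreeM.mk_out x
  rw [this, Trm.rename_id, FreeM.mk_out]

/-- The canonical representative term of a `TS`-element in the composite signature. -/
noncomputable def rep (q : TSobj SS TT X) : Trm (SS.sig.sum TT.sig) X :=
  sepTS (tsRep SS TT q)

/-- Essential uniqueness of separations, as a derivability statement. -/
theorem sepUnique {t t' : Trm TT.sig (Trm SS.sig X)}
    (h : clTS SS TT t = clTS SS TT t') :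
    Deriv (EUlam SS TT d) (sepTS t) (sepTS t') := by
  have hd : Deriv TT.eqns (t.rename FreeM.mk) (t'.rename FreeM.mk) := derivOfEq h
  have h2 := Deriv.subst (fun c => Trm.inl (Quot.out c)) (deriv_inr SS TT d hd)
  have key : ∀ w : Trm TT.sig (Trm SS.sig X),
      Deriv (EUlam SS TT d)
        ((Trm.inr (w.rename (FreeM.mk (E := SS.eqns)))).bind
          (fun c => Trm.inl (Quot.out c))) (sepTS w) := by
    intro w
    rw [Trm.inr_rename, Trm.rename_bind]
    exact Deriv.bind_congr (fun s => deriv_inl SS TT d (deriv_out s))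
  exact ((key t).symm.trans h2).trans (key t')

end Embed
section Sem

variable (SS TT : Thy) (d : DistLaw SS TT)

/-- The `λ`-induced `𝕊`-algebra structure on `TSZ`. -/
noncomputable def alph (Z : Type) (c : FreeM SS.sig SS.eqns (TSobj SS TT Z)) : TSobj SS TT Z :=
  FreeM.map FreeM.mul (d.app (FreeM SS.sig SS.eqns Z) c)

theorem alph_unit (Z : Type) (q : TSobj SS TT Z) : alph SS TT d Z (FreeM.unit q) = q := by
  unfold alph
  rw [d.unitS, FreeM.map_map]
  have : (fun c : FreeM SS.sig SS.eqns Z => FreeM.mul (FreeM.unit c)) = fun c => c :=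
    funext fun c => FreeM.mul_unit c
  rw [this, FreeM.map_id]

theorem alph_alg (Z : Type)
    (Q : FreeM SS.sig SS.eqns (FreeM SS.sig SS.eqns (TSobj SS TT Z))) :
    alph SS TT d Z (FreeM.mul Q) = alph SS TT d Z (FreeM.map (alph SS TT d Z) Q) := by
  unfold alph
  rw [d.mulS, FreeM.map_map]
  have h1 : FreeM.map (fun c => FreeM.map (FreeM.mul (σ := SS.sig)) (d.app _ c)) Q
      = FreeM.map (FreeM.map FreeM.mul) (FreeM.map (d.app (FreeM SS.sig SS.eqns Z)) Q) := by
    rw [FreeM.map_map]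
  rw [h1, d.natural _ _ (FreeM.mul (σ := SS.sig) (E := SS.eqns) (X := Z)), FreeM.map_map]
  apply congrArg (fun h => FreeM.map h _) ?_
  exact funext fun z => (FreeM.mul_assoc z).symm ▸ rfl

theorem alph_natural (Z Z' : Type) (f : Z → Z')
    (c : FreeM SS.sig SS.eqns (TSobj SS TT Z)) :
    FreeM.map (FreeM.map f) (alph SS TT d Z c) =
      alph SS TT d Z' (FreeM.map (FreeM.map (FreeM.map f)) c) := by
  unfold alph
  rw [d.natural _ _ (FreeM.map f), FreeM.map_map, FreeM.map_map]
  apply congrArg (fun h => FreeM.map h _)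
  exact funext fun z => (FreeM.mul_map_map f z).symm

/-- Evaluation of composite-signature terms in `TSZ`, given a valuation. -/
noncomputable def ev {Z X' : Type} (ρ : X' → TSobj SS TT Z) :
    Trm (SS.sig.sum TT.sig) X' → TSobj SS TT Z
  | .var x => ρ x
  | .op (Sum.inl f) k => alph SS TT d Z (FreeM.mk (.op f (fun i => .var (ev ρ (k i)))))
  | .op (Sum.inr f) k => FreeM.mk (.op f (fun i => Quot.out (ev ρ (k i))))

theorem ev_var {Z X' : Type} (ρ : X' → TSobj SS TT Z) (x : X') :
    ev SS TT d ρ (.var x) = ρ x := rfl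

theorem ev_op_inl {Z X' : Type} (ρ : X' → TSobj SS TT Z) (f : SS.sig.ops)
    (k : Fin ((SS.sig.sum TT.sig).ar (Sum.inl f)) → Trm (SS.sig.sum TT.sig) X') :
    ev SS TT d ρ (.op (Sum.inl f) k) =
      alph SS TT d Z (FreeM.mk (.op f (fun i => .var (ev SS TT d ρ (k i))))) := by
  rw [ev]

theorem ev_op_inr {Z X' : Type} (ρ : X' → TSobj SS TT Z) (f : TT.sig.ops)
    (k : Fin ((SS.sig.sum TT.sig).ar (Sum.inr f)) → Trm (SS.sig.sum TT.sig) X') :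
    ev SS TT d ρ (.op (Sum.inr f) k) =
      FreeM.mk (.op f (fun i => Quot.out (ev SS TT d ρ (k i)))) := by
  rw [ev]

theorem ev_bind {Z X' Y' : Type} (ρ : Y' → TSobj SS TT Z) (g : X' → Trm (SS.sig.sum TT.sig) Y')
    (u : Trm (SS.sig.sum TT.sig) X') :
    ev SS TT d ρ (u.bind g) = ev SS TT d (fun x => ev SS TT d ρ (g x)) u := by
  induction u with
  | var x => rfl
  | op f k ih =>
    cases f with
    | inl f =>
      show ev SS TT d ρ (.op (Sum.inl f) (fun i => (k i).bind g)) = _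
      rw [ev_op_inl, ev_op_inl]
      exact congrArg _ (congrArg _ (congrArg _ (funext fun i => congrArg _ (ih i))))
    | inr f =>
      show ev SS TT d ρ (.op (Sum.inr f) (fun i => (k i).bind g)) = _
      rw [ev_op_inr, ev_op_inr]
      exact congrArg _ (congrArg _ (funext fun i => congrArg _ (ih i)))

theorem ev_rename {Z X' Y' : Type} (ρ : Y' → TSobj SS TT Z) (f : X' → Y')
    (u : Trm (SS.sig.sum TT.sig) X') :
    ev SS TT d ρ (u.rename f) = ev SS TT d (fun x => ρ (f x)) u :=
  ev_bind SS TT d ρ _ u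

theorem ev_natural {Z Z' X' : Type} (f : Z → Z') (ρ : X' → TSobj SS TT Z)
    (u : Trm (SS.sig.sum TT.sig) X') :
    FreeM.map (FreeM.map f) (ev SS TT d ρ u) =
      ev SS TT d (fun x => FreeM.map (FreeM.map f) (ρ x)) u := by
  induction u with
  | var x => rfl
  | op F k ih =>
    cases F with
    | inl F =>
      rw [ev_op_inl, ev_op_inl, alph_natural, FreeM.map_mk]
      apply congrArg
      apply congrArg
      show Trm.op F _ = Trm.op F _
      exact congrArg _ (funext fun i => congrArg _ (ih i))
    | inr F =>
      rw [ev_op_inr, ev_op_inr, FreeM.map_mk]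
      show FreeM.mk (Trm.op F _) = FreeM.mk (Trm.op F _)
      apply FreeM.sound
      apply Deriv.congr
      intro i
      apply derivOfEq
      rw [FreeM.mk_out, ← ih i]; rfl

end Sem
section Sound

variable (SS TT : Thy) (d : DistLaw SS TT)

theorem ev_inl {Z X' : Type} (ρ : X' → TSobj SS TT Z) (s : Trm SS.sig X') :
    ev SS TT d ρ (Trm.inl s) = alph SS TT d Z (FreeM.mk (s.rename ρ)) := by
  induction s with
  | var x => exact (alph_unit SS TT d Z (ρ x)).symm
  | op f k ih =>
    show ev SS TT d ρ (.op (Sum.inl f) (fun i => Trm.inl (k i))) = _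
    rw [ev_op_inl]
    have h1 : (fun i : Fin (SS.sig.ar f) =>
          Trm.var (σ := SS.sig) (ev SS TT d ρ (Trm.inl (k i)))) =
        (fun i : Fin (SS.sig.ar f) =>
          Trm.var (σ := SS.sig) (alph SS TT d Z (FreeM.mk ((k i).rename ρ)))) :=
      funext fun i => congrArg _ (ih i)
    rw [h1]
    have h2 : FreeM.mk (E := SS.eqns) (Trm.op f fun i =>
          Trm.var (alph SS TT d Z (FreeM.mk ((k i).rename ρ)))) =
        FreeM.map (alph SS TT d Z)
          (FreeM.mk (E := SS.eqns) (Trm.op f fun i => Trm.var (FreeM.mk ((k i).rename ρ)))) := by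
      rw [FreeM.map_mk]; rfl
    rw [h2, ← alph_alg, FreeM.mul_mk]
    apply congrArg
    apply FreeM.sound
    show Deriv _ (Trm.op f _) (Trm.op f _)
    exact Deriv.congr f (fun i => deriv_out _)

theorem ev_inr {Z X' : Type} (ρ : X' → TSobj SS TT Z) (t : Trm TT.sig X') :
    ev SS TT d ρ (Trm.inr t) = FreeM.mul (FreeM.mk (t.rename ρ)) := by
  induction t with
  | var x => exact (FreeM.mul_unit (ρ x)).symm
  | op f k ih =>
    show ev SS TT d ρ (.op (Sum.inr f) (fun i => Trm.inr (k i))) = _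
    rw [ev_op_inr, FreeM.mul_mk]
    apply FreeM.sound
    show Deriv _ (Trm.op f _) (Trm.op f _)
    apply Deriv.congr f
    intro i
    apply derivOfEq
    rw [FreeM.mk_out, ih i, FreeM.mul_mk]
    rfl

theorem alph_eta {Z : Type} (P : FreeM SS.sig SS.eqns (FreeM SS.sig SS.eqns Z)) :
    alph SS TT d Z (FreeM.map FreeM.unit P) = FreeM.unit (FreeM.mul P) := by
  unfold alph
  rw [d.unitT, FreeM.map_unit]

theorem ev_inl_eta {Z : Type} (s : Trm SS.sig Z) :
    ev SS TT d (fun x => etaTS SS TT Z x) (Trm.inl s) = FreeM.unit (FreeM.mk s) := by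
  rw [ev_inl]
  have h1 : FreeM.mk (E := SS.eqns) (s.rename (fun x => etaTS SS TT Z x)) =
      FreeM.map (FreeM.unit (E := TT.eqns))
        (FreeM.mk (E := SS.eqns) (s.rename (FreeM.unit (E := SS.eqns)))) := by
    rw [FreeM.map_mk, Trm.rename_rename]; rfl
  rw [h1, alph_eta, FreeM.mul_mk]
  apply congrArg
  apply FreeM.sound
  have : ∀ x : Z, Deriv SS.eqns ((Trm.var (FreeM.unit (E := SS.eqns) x)).bind Quot.out)
      (Trm.var x) := fun x => deriv_out _
  rw [Trm.rename_def]; erw [Trm.bind_assoc]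
  refine (Deriv.bind_congr (fun x => this x)).trans ?_
  rw [Trm.bind_var]
  exact Deriv.refl s

theorem ev_sepTS {Z : Type} (w : Trm TT.sig (Trm SS.sig Z)) :
    ev SS TT d (fun x => etaTS SS TT Z x) (sepTS w) = clTS SS TT w := by
  show ev SS TT d _ ((Trm.inr w).bind _) = _
  rw [ev_bind]
  have h1 : (fun s : Trm SS.sig Z => ev SS TT d (fun x => etaTS SS TT Z x) (Trm.inl s)) =
      fun s => FreeM.unit (FreeM.mk s) := funext fun s => ev_inl_eta SS TT d s
  rw [ev_inr, h1, FreeM.mul_mk, clTS]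
  apply FreeM.sound
  rw [Trm.rename_def]; erw [Trm.bind_assoc]
  exact Deriv.bind_congr (fun s => deriv_out _)

/-- The Kleisli extension of `ρ` for the composite monad, precomposed with nothing:
`TSℕ → TSZ`. -/
noncomputable def kk {Z : Type} (ρ : ℕ → TSobj SS TT Z) (q : TSobj SS TT ℕ) : TSobj SS TT Z :=
  FreeM.map FreeM.mul (FreeM.mul (FreeM.map (d.app (FreeM SS.sig SS.eqns Z))
    (FreeM.map (FreeM.map ρ) q)))

theorem kk_clTS {Z : Type} (ρ : ℕ → TSobj SS TT Z) (t : Trm TT.sig (Trm SS.sig ℕ)) :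
    kk SS TT d ρ (clTS SS TT t) =
      FreeM.mul (FreeM.mk (t.rename (fun s => alph SS TT d Z (FreeM.mk (s.rename ρ))))) := by
  unfold kk clTS
  rw [FreeM.map_mk, Trm.rename_rename, FreeM.map_mk, Trm.rename_rename, FreeM.mul_mk]; erw [Trm.rename_bind]; rw [FreeM.map_mk, Trm.bind_rename, FreeM.mul_mk]; erw [Trm.rename_bind]
  apply FreeM.sound
  apply Deriv.bind_congr
  intro s
  apply derivOfEq
  rw [FreeM.mk_out]
  show FreeM.map FreeM.mul _ = alph SS TT d Z (FreeM.mk (s.rename ρ))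
  unfold alph
  rw [← FreeM.map_mk ρ s]

theorem kk_dapp {Z : Type} (ρ : ℕ → TSobj SS TT Z) (s : Trm SS.sig (Trm TT.sig ℕ)) :
    kk SS TT d ρ (d.app ℕ (clST SS TT s)) =
      alph SS TT d Z
        (FreeM.mk (s.rename (fun t' => FreeM.mul (FreeM.mk (t'.rename ρ))))) := by
  unfold kk
  rw [← d.natural ℕ (TSobj SS TT Z) ρ, ← d.mulT]
  unfold alph
  apply congrArg
  apply congrArg
  unfold clST
  rw [FreeM.map_mk, Trm.rename_rename, FreeM.map_mk, Trm.rename_rename]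
  have hf : (fun x : Trm TT.sig ℕ => FreeM.mul (FreeM.map ρ (FreeM.mk (E := TT.eqns) x))) =
      (fun t' : Trm TT.sig ℕ => FreeM.mul (FreeM.mk (t'.rename ρ))) :=
    funext fun t' => by rw [FreeM.map_mk]
  rw [hf]

theorem ev_sound {X' : Type} {u v : Trm (SS.sig.sum TT.sig) X'}
    (h : Deriv (EUlam SS TT d) u v) {Z : Type} (ρ : X' → TSobj SS TT Z) :
    ev SS TT d ρ u = ev SS TT d ρ v := by
  induction h with
  | @ax X e he g =>
    rcases he with (⟨e0, he0, heq⟩ | ⟨e0, he0, heq⟩) | ⟨s, t, heq, hst⟩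
    · rw [heq]
      rw [ev_bind, ev_bind, ev_inl, ev_inl]
      apply congrArg
      apply FreeM.sound
      have := Deriv.ax (E := SS.eqns) he0 (fun n => Trm.var (ev SS TT d ρ (g n)))
      rw [Trm.rename_def, Trm.rename_def]
      exact this
    · rw [heq]
      rw [ev_bind, ev_bind, ev_inr, ev_inr]
      apply congrArg
      apply FreeM.sound
      have := Deriv.ax (E := TT.eqns) he0 (fun n => Trm.var (ev SS TT d ρ (g n)))
      rw [Trm.rename_def, Trm.rename_def]
      exact this
    · rw [heq]
      rw [ev_bind, ev_bind]
      show ev SS TT d _ ((Trm.inl s).bind _) = ev SS TT d _ ((Trm.inr t).bind _)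
      rw [ev_bind, ev_bind, ev_inl, ev_inr]
      set ρ' := fun n => ev SS TT d ρ (g n) with hρ'
      have hL : (fun t' : Trm TT.sig ℕ => ev SS TT d ρ' (Trm.inr t')) =
          fun t' => FreeM.mul (FreeM.mk (t'.rename ρ')) :=
        funext fun t' => ev_inr SS TT d ρ' t'
      have hR : (fun s' : Trm SS.sig ℕ => ev SS TT d ρ' (Trm.inl s')) =
          fun s' => alph SS TT d Z (FreeM.mk (s'.rename ρ')) :=
        funext fun s' => ev_inl SS TT d ρ' s'
      rw [hL, hR, ← kk_dapp, ← kk_clTS, hst]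
  | refl t => rfl
  | symm _ ih => exact (ih ρ).symm
  | trans _ _ ih1 ih2 => exact (ih1 ρ).trans (ih2 ρ)
  | @congr X f k k' hk ih =>
    cases f with
    | inl f =>
      rw [ev_op_inl, ev_op_inl]
      exact congrArg _ (congrArg _ (congrArg _ (funext fun i => congrArg _ (ih i ρ))))
    | inr f =>
      rw [ev_op_inr, ev_op_inr]
      exact congrArg _ (congrArg _ (funext fun i => congrArg _ (ih i ρ)))
  | subst g _ ih =>
    rw [ev_bind, ev_bind]
    exact ih _

/-- The comparison map. -/
noncomputable def theta (X : Type) (q : FreeM (SS.sig.sum TT.sig) (EUlam SS TT d) X) :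
    TSobj SS TT X :=
  Quot.lift (ev SS TT d (fun x => etaTS SS TT X x))
    (fun _ _ h => ev_sound SS TT d h _) q

theorem theta_mk (X : Type) (u : Trm (SS.sig.sum TT.sig) X) :
    theta SS TT d X (FreeM.mk u) = ev SS TT d (fun x => etaTS SS TT X x) u := rfl

end Sound
section Theta

variable (SS TT : Thy) (d : DistLaw SS TT)

/-- Term-level form of the composite multiplication. -/
noncomputable def AA (X : Type) (c : FreeM SS.sig SS.eqns (TSobj SS TT X)) :
    Trm TT.sig (FreeM SS.sig SS.eqns X) :=
  (Quot.out (d.app (FreeM SS.sig SS.eqns X) c)).rename FreeM.mul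

theorem mk_AA (X : Type) (c : FreeM SS.sig SS.eqns (TSobj SS TT X)) :
    FreeM.mk (AA SS TT d X c) = alph SS TT d X c := rfl

theorem muTSd_mk (X : Type) (V : Trm TT.sig (FreeM SS.sig SS.eqns (TSobj SS TT X))) :
    muTSd SS TT d X (FreeM.mk V) = FreeM.mk (V.bind (AA SS TT d X)) := by
  unfold muTSd
  rw [FreeM.map_mk, FreeM.mul_mk]; erw [Trm.rename_bind]; rw [FreeM.map_mk, Trm.bind_rename]
  rfl

theorem muTSd_out (X : Type) (q : TSobj SS TT (TSobj SS TT X)) :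
    muTSd SS TT d X q = FreeM.mk ((Quot.out q).bind (AA SS TT d X)) := by
  conv_lhs => rw [← FreeM.mk_out q]
  rw [muTSd_mk]

theorem muTSd_eta (X : Type) (q : TSobj SS TT X) :
    muTSd SS TT d X (FreeM.unit (FreeM.unit q)) = q := by
  have : FreeM.unit (E := TT.eqns) (FreeM.unit q) =
      FreeM.mk (E := TT.eqns) (Trm.var (FreeM.unit (E := SS.eqns) q)) := rfl
  rw [this, muTSd_mk]
  show FreeM.mk (AA SS TT d X (FreeM.unit q)) = q
  rw [mk_AA, alph_unit]

theorem mu_alph (X : Type)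
    (c : FreeM SS.sig SS.eqns (TSobj SS TT (TSobj SS TT X))) :
    muTSd SS TT d X (alph SS TT d (TSobj SS TT X) c) =
      alph SS TT d X (FreeM.map (muTSd SS TT d X) c) := by
  unfold muTSd alph
  -- normalize LHS
  rw [FreeM.map_map]
  have e1 : (fun z => d.app (FreeM SS.sig SS.eqns X) (FreeM.mul z)) =
      (fun z : FreeM SS.sig SS.eqns (FreeM SS.sig SS.eqns (TSobj SS TT X)) =>
        FreeM.map FreeM.mul (d.app _ (FreeM.map (d.app _) z))) :=
    funext fun z => d.mulS (FreeM SS.sig SS.eqns X) z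
  rw [e1]
  have e2 : FreeM.map (fun z : FreeM SS.sig SS.eqns (FreeM SS.sig SS.eqns (TSobj SS TT X)) =>
        FreeM.map FreeM.mul (d.app _ (FreeM.map (d.app _) z)))
        (d.app _ c) =
      FreeM.map (FreeM.map FreeM.mul)
        (FreeM.map (fun z => d.app _ (FreeM.map (d.app _) z)) (d.app _ c)) := by
    rw [FreeM.map_map]
  rw [e2, FreeM.mul_map_map, FreeM.map_map]
  -- normalize RHS
  have e3 : FreeM.map (fun q => FreeM.map (FreeM.mul (σ := SS.sig) (E := SS.eqns) (X := X))
        (FreeM.mul (FreeM.map (d.app _) q))) c =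
      FreeM.map (FreeM.map FreeM.mul)
        (FreeM.map FreeM.mul (FreeM.map (FreeM.map (d.app _)) c)) := by
    rw [FreeM.map_map, FreeM.map_map]
  rw [e3]
  rw [d.natural _ _ (FreeM.mul (σ := SS.sig) (E := SS.eqns) (X := X)), d.mulT]
  rw [d.natural _ _ (d.app (FreeM SS.sig SS.eqns X)), FreeM.map_map, FreeM.map_map]
  apply congrArg (fun h => FreeM.map h _)
  exact funext fun z => (FreeM.mul_assoc z).symm

theorem ev_mu {X X' : Type} (ρ : X' → TSobj SS TT X) (u : Trm (SS.sig.sum TT.sig) X') :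
    ev SS TT d ρ u =
      muTSd SS TT d X (ev SS TT d (fun x => FreeM.unit (FreeM.unit (ρ x))) u) := by
  induction u with
  | var x => exact (muTSd_eta SS TT d X (ρ x)).symm
  | op F k ih =>
    cases F with
    | inl F =>
      rw [ev_op_inl, ev_op_inl, mu_alph, FreeM.map_mk]
      apply congrArg
      apply congrArg
      show Trm.op F _ = Trm.op F _
      exact congrArg _ (funext fun i => congrArg _ (ih i))
    | inr F =>
      rw [ev_op_inr, ev_op_inr, muTSd_mk]
      apply FreeM.sound
      show Deriv _ (Trm.op F _) (Trm.op F _)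
      apply Deriv.congr F
      intro i
      apply derivOfEq
      rw [FreeM.mk_out, ih i, muTSd_out]

noncomputable def etaV (X : Type) : X → TSobj SS TT X := fun x => etaTS SS TT X x

theorem theta_unit (X : Type) (x : X) :
    theta SS TT d X (FreeM.unit x) = etaTS SS TT X x := rfl

theorem theta_out (X : Type) (q : FreeM (SS.sig.sum TT.sig) (EUlam SS TT d) X) :
    theta SS TT d X q = ev SS TT d (etaV SS TT X) (Quot.out q) := by
  conv_lhs => rw [← FreeM.mk_out q]
  rfl

theorem theta_natural (X Y : Type) (f : X → Y)
    (q : FreeM (SS.sig.sum TT.sig) (EUlam SS TT d) X) :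
    theta SS TT d Y (FreeM.map f q) = FreeM.map (FreeM.map f) (theta SS TT d X q) := by
  induction q using Quot.ind with
  | _ u =>
    show theta SS TT d Y (FreeM.map f (FreeM.mk u)) =
      FreeM.map (FreeM.map f) (theta SS TT d X (FreeM.mk u))
    rw [FreeM.map_mk, theta_mk, theta_mk, ev_rename, ev_natural]
    apply congrArg (fun ρ => ev SS TT d ρ u)
    funext x
    show etaTS SS TT Y (f x) = FreeM.map (FreeM.map f) (etaTS SS TT X x)
    unfold etaTS
    rw [FreeM.map_unit, FreeM.map_unit]

theorem theta_mul (X : Type)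
    (q : FreeM (SS.sig.sum TT.sig) (EUlam SS TT d)
        (FreeM (SS.sig.sum TT.sig) (EUlam SS TT d) X)) :
    theta SS TT d X (FreeM.mul q) =
      muTSd SS TT d X (theta SS TT d (TSobj SS TT X) (FreeM.map (theta SS TT d X) q)) := by
  induction q using Quot.ind with
  | _ U =>
    show theta SS TT d X (FreeM.mul (FreeM.mk U)) =
      muTSd SS TT d X (theta SS TT d (TSobj SS TT X)
        (FreeM.map (theta SS TT d X) (FreeM.mk U)))
    rw [FreeM.mul_mk, FreeM.map_mk, theta_mk, theta_mk]; erw [ev_bind]; rw [ev_rename]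
    have h1 : (fun c => ev SS TT d (fun x => etaTS SS TT X x) (Quot.out c)) =
        theta SS TT d X := funext fun c => (theta_out SS TT d X c).symm
    have h2 : ev SS TT d (fun c => ev SS TT d (fun x => etaTS SS TT X x) (Quot.out c)) U =
        ev SS TT d (theta SS TT d X) U := congrArg (fun ρ => ev SS TT d ρ U) h1
    exact h2.trans ((ev_mu SS TT d (theta SS TT d X) U).trans rfl)

theorem theta_phi (X : Type) (q : TSobj SS TT X) :
    theta SS TT d X (FreeM.mk (rep SS TT q)) = q := by
  rw [theta_mk]
  show ev SS TT d _ (sepTS (tsRep SS TT q)) = q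
  rw [ev_sepTS, clTS_tsRep]

end Theta
section Paths

variable {τ : Sgn} {A : Type}

/-- Label every leaf of a term by the code of its position. -/
def pathLabel : Trm τ A → List ℕ → Trm τ ℕ
  | .var _, p => .var (Encodable.encode p)
  | .op f k, p => .op f (fun i => pathLabel (k i) (p ++ [i.val]))

/-- The leaf of a term at a given position. -/
def pathVal (dflt : A) : Trm τ A → List ℕ → A
  | .var a, [] => a
  | .var _, _ :: _ => dflt
  | .op _ _, [] => dflt
  | .op f k, i :: p => if h : i < τ.ar f then pathVal dflt (k ⟨i, h⟩) p else dflt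

theorem pathLabel_rename (dflt : A) (t : Trm τ A) (p : List ℕ) (h : ℕ → A)
    (H : ∀ p', h (Encodable.encode (p ++ p')) = pathVal dflt t p') :
    (pathLabel t p).rename h = t := by
  induction t generalizing p with
  | var a =>
    show Trm.var (h (Encodable.encode p)) = Trm.var a
    have := H []
    rw [List.append_nil] at this
    rw [this]
    rfl
  | op f k ih =>
    show Trm.op f _ = Trm.op f k
    apply congrArg
    funext i
    show (pathLabel (k i) (p ++ [i.val])).rename h = k i
    apply ih
    intro p'
    have := H (i.val :: p')
    rw [show p ++ i.val :: p' = (p ++ [i.val]) ++ p' by simp] at this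
    rw [this]
    show pathVal dflt (Trm.op f k) (i.val :: p') = _
    show (if h : i.val < τ.ar f then pathVal dflt (k ⟨i.val, h⟩) p' else dflt) = _
    rw [dif_pos i.isLt]

end Paths

section Complete

variable (SS TT : Thy) (d : DistLaw SS TT)

/-- `rep₂`: representative built from a term over `S`-classes. -/
noncomputable def rep2 {X : Type} (a : Trm TT.sig (FreeM SS.sig SS.eqns X)) :
    Trm (SS.sig.sum TT.sig) X :=
  (Trm.inr a).bind (fun c => Trm.inl (Quot.out c))

theorem rep_eq_rep2 {X : Type} (q : TSobj SS TT X) :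
    rep SS TT q = rep2 SS TT (Quot.out q) := by
  unfold rep rep2 sepTS tsRep
  erw [Trm.inr_rename]; rw [Trm.rename_bind]
  rfl

theorem rep_mk_deriv {X : Type} (a : Trm TT.sig (FreeM SS.sig SS.eqns X)) :
    Deriv (EUlam SS TT d) (rep SS TT (FreeM.mk a)) (rep2 SS TT a) := by
  rw [rep_eq_rep2]
  exact Deriv.subst _ (deriv_inr SS TT d (deriv_out a))

theorem sep_rep {X : Type} (w : Trm TT.sig (Trm SS.sig X)) :
    Deriv (EUlam SS TT d) (rep SS TT (clTS SS TT w)) (sepTS w) :=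
  sepUnique SS TT d (clTS_tsRep SS TT (clTS SS TT w))

theorem inr_bind_inl {X Y : Type} (t : Trm TT.sig X) (h : X → Trm SS.sig Y) :
    (Trm.inr t).bind (fun n => Trm.inl (h n)) = sepTS (t.rename h) := by
  unfold sepTS
  rw [Trm.inr_rename, Trm.rename_bind]

theorem sepTS_bind_inl {N Y : Type} (t : Trm TT.sig (Trm SS.sig N)) (h : N → Trm SS.sig Y) :
    (sepTS t).bind (fun n => Trm.inl (h n)) = sepTS (t.rename (fun s => s.bind h)) := by
  unfold sepTS
  rw [Trm.bind_assoc, Trm.inr_rename, Trm.rename_bind]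
  apply congrArg
  funext s
  rw [← Trm.inl_bind]

end Complete
section Complete2

variable (SS TT : Thy) (d : DistLaw SS TT)

/-- Valuation for the path codes. -/
noncomputable def hFun {X' : Type} (dflt : Trm SS.sig X') (F : SS.sig.ops)
    (w : Fin (SS.sig.ar F) → Trm TT.sig (Trm SS.sig X')) : ℕ → Trm SS.sig X' :=
  fun m => match (Encodable.decode m : Option (List ℕ)) with
    | some (i :: p) => if hh : i < SS.sig.ar F then pathVal dflt (w ⟨i, hh⟩) p else dflt
    | _ => dflt

theorem hren {X' : Type} (dflt : Trm SS.sig X') (F : SS.sig.ops)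
    (w : Fin (SS.sig.ar F) → Trm TT.sig (Trm SS.sig X')) (i : Fin (SS.sig.ar F)) :
    (pathLabel (w i) [i.val]).rename (hFun SS TT dflt F w) = w i := by
  apply pathLabel_rename dflt
  intro p'
  show hFun SS TT dflt F w (Encodable.encode (i.val :: p')) = _
  unfold hFun
  rw [Encodable.encodek]
  show (if hh : i.val < SS.sig.ar F then pathVal dflt (w ⟨i.val, hh⟩) p' else dflt) = _
  rw [dif_pos i.isLt]

/-- Key step: a `σ`-operation applied to representatives is derivably equal to the
representative of the `alph`-value. -/
theorem complete_inl {X' : Type} (dflt : Trm SS.sig X') (F : SS.sig.ops)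
    (q : Fin (SS.sig.ar F) → TSobj SS TT X') :
    Deriv (EUlam SS TT d)
      (Trm.op (Sum.inl F)
        (fun i : Fin ((SS.sig.sum TT.sig).ar (Sum.inl F)) => rep SS TT (q i)))
      (rep SS TT (alph SS TT d X'
        (FreeM.mk (Trm.op F (fun i => Trm.var (q i)))))) := by
  set w : Fin (SS.sig.ar F) → Trm TT.sig (Trm SS.sig X') :=
    fun i => tsRep SS TT (q i) with hw
  set h : ℕ → Trm SS.sig X' := hFun SS TT dflt F w with hh
  set t' : Fin (SS.sig.ar F) → Trm TT.sig ℕ :=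
    fun i => pathLabel (w i) [i.val] with ht'
  set s₀ : Trm SS.sig (Trm TT.sig ℕ) := Trm.op F (fun i => Trm.var (t' i)) with hs₀
  set Q : TSobj SS TT ℕ := d.app ℕ (clST SS TT s₀) with hQ
  set t₀ : Trm TT.sig (Trm SS.sig ℕ) := tsRep SS TT Q with ht₀
  set g : ℕ → Trm (SS.sig.sum TT.sig) X' := fun n => Trm.inl (h n) with hg
  set W : Trm TT.sig (Trm SS.sig X') := t₀.rename (fun s => s.bind h) with hW
  have hrenw : ∀ i, (t' i).rename h = w i := fun i => hren SS TT dflt F w i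
  have mem : ((sepST s₀, sepTS t₀) : Eqn (SS.sig.sum TT.sig)) ∈ EUlam SS TT d :=
    Or.inr ⟨s₀, t₀, rfl, (clTS_tsRep SS TT Q).symm⟩
  have hax : Deriv (EUlam SS TT d) ((sepST s₀).bind g) ((sepTS t₀).bind g) :=
    Deriv.ax mem g
  have hL : (sepST s₀).bind g =
      Trm.op (Sum.inl F)
        (fun i : Fin ((SS.sig.sum TT.sig).ar (Sum.inl F)) => rep SS TT (q i)) := by
    show Trm.op (Sum.inl F)
      (fun i : Fin ((SS.sig.sum TT.sig).ar (Sum.inl F)) => (Trm.inr (t' i)).bind g) = _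
    refine congrArg (Trm.op (σ := SS.sig.sum TT.sig) (X := X') (Sum.inl F))
      (funext fun i : Fin ((SS.sig.sum TT.sig).ar (Sum.inl F)) => ?_)
    show (Trm.inr (t' i)).bind g = rep SS TT (q i)
    rw [hg, inr_bind_inl, hrenw i]
    rfl
  have hsep : (sepTS t₀).bind g = sepTS W := by
    rw [hg, sepTS_bind_inl, hW]
  have hsem : clTS SS TT W =
      alph SS TT d X' (FreeM.mk (Trm.op F (fun i => Trm.var (q i)))) := by
    have c1 : clTS SS TT W =
        FreeM.map (fun c => FreeM.mul (FreeM.map (fun n => FreeM.mk (h n)) c))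
          (clTS SS TT t₀) := by
      unfold clTS
      rw [hW, Trm.rename_rename, FreeM.map_mk, Trm.rename_rename]
      exact congrArg FreeM.mk (congrArg (fun f => Trm.rename f t₀) (funext fun s => by
        show FreeM.mk (s.bind h) =
          FreeM.mul (FreeM.map (fun n => FreeM.mk (h n)) (FreeM.mk s))
        rw [FreeM.map_mk, FreeM.mul_mk]; erw [Trm.rename_bind]
        exact (FreeM.sound (Deriv.bind_congr (fun n => deriv_out (h n)))).symm))
    rw [c1, ht₀, clTS_tsRep, hQ]
    have c2 : FreeM.map (fun c => FreeM.mul (FreeM.map (fun n => FreeM.mk (h n)) c))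
        (d.app ℕ (clST SS TT s₀)) =
        FreeM.map FreeM.mul (FreeM.map (FreeM.map (fun n => FreeM.mk (h n)))
          (d.app ℕ (clST SS TT s₀))) := by
      rw [FreeM.map_map]
    rw [c2, ← d.natural ℕ (FreeM SS.sig SS.eqns X') (fun n => FreeM.mk (h n))
      (clST SS TT s₀)]
    show alph SS TT d X'
      (FreeM.map (FreeM.map (fun n => FreeM.mk (h n))) (clST SS TT s₀)) = _
    apply congrArg
    unfold clST
    rw [FreeM.map_mk, Trm.rename_rename, hs₀]
    show FreeM.mk (Trm.op F (fun i =>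
      Trm.var (FreeM.map (fun n => FreeM.mk (h n)) (FreeM.mk (t' i))))) = _
    refine congrArg FreeM.mk (congrArg (Trm.op F) (funext fun i => congrArg Trm.var ?_))
    rw [FreeM.map_mk,
      show (t' i).rename (fun n => FreeM.mk (E := SS.eqns) (h n)) =
        ((t' i).rename h).rename FreeM.mk from (Trm.rename_rename h FreeM.mk (t' i)).symm,
      hrenw i]
    exact clTS_tsRep SS TT (q i)
  have hfin : Deriv (EUlam SS TT d) (sepTS W)
      (rep SS TT (alph SS TT d X' (FreeM.mk (Trm.op F (fun i => Trm.var (q i)))))) :=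
    sepUnique SS TT d (hsem.trans (clTS_tsRep SS TT _).symm)
  rw [← hL]
  exact hax.trans (by rw [hsep]; exact hfin)

end Complete2
section Final

variable (SS TT : Thy) (d : DistLaw SS TT)

theorem complete' {X' : Type} (dflt : Trm SS.sig X') (u : Trm (SS.sig.sum TT.sig) X') :
    Deriv (EUlam SS TT d) u (rep SS TT (ev SS TT d (etaV SS TT X') u)) := by
  induction u with
  | var x => exact (sep_rep SS TT d (Trm.var (Trm.var x))).symm
  | op F k ih =>
    cases F with
    | inl F =>
      have step1 : Deriv (EUlam SS TT d) (Trm.op (Sum.inl F) k)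
          (Trm.op (Sum.inl F)
            (fun i => rep SS TT (ev SS TT d (etaV SS TT X') (k i)))) :=
        Deriv.congr (σ := SS.sig.sum TT.sig) (Sum.inl F)
          (k := k) (k' := fun i => rep SS TT (ev SS TT d (etaV SS TT X') (k i)))
          (fun i => ih i)
      refine step1.trans ?_
      rw [ev_op_inl]
      exact complete_inl SS TT d dflt F (fun i => ev SS TT d (etaV SS TT X') (k i))
    | inr F =>
      have step1 : Deriv (EUlam SS TT d) (Trm.op (Sum.inr F) k)
          (Trm.op (Sum.inr F)
            (fun i => rep SS TT (ev SS TT d (etaV SS TT X') (k i)))) :=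
        Deriv.congr (σ := SS.sig.sum TT.sig) (Sum.inr F)
          (k := k) (k' := fun i => rep SS TT (ev SS TT d (etaV SS TT X') (k i)))
          (fun i => ih i)
      refine step1.trans ?_
      rw [ev_op_inr]
      have e : (fun i : Fin ((SS.sig.sum TT.sig).ar (Sum.inr F)) =>
            rep SS TT (ev SS TT d (etaV SS TT X') (k i))) =
          fun i => rep2 SS TT (Quot.out (ev SS TT d (etaV SS TT X') (k i))) :=
        funext fun i => rep_eq_rep2 SS TT _
      rw [e]
      exact (rep_mk_deriv SS TT d
        (Trm.op F (fun i => Quot.out (ev SS TT d (etaV SS TT X') (k i))))).symm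

theorem complete {X : Type} (u : Trm (SS.sig.sum TT.sig) X) :
    Deriv (EUlam SS TT d) u (rep SS TT (ev SS TT d (etaV SS TT X) u)) := by
  have h1 := complete' SS TT d (X' := X ⊕ ℕ) (Trm.var (Sum.inr 0)) (u.rename Sum.inl)
  have h2 := Deriv.subst
    (Sum.elim (fun x => Trm.var (σ := SS.sig.sum TT.sig) x) (fun _ : ℕ => u)) h1
  have hLHS : (u.rename Sum.inl).bind
      (Sum.elim (fun x => Trm.var (σ := SS.sig.sum TT.sig) x) (fun _ : ℕ => u)) = u := by
    rw [Trm.rename_bind]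
    exact Trm.bind_var u
  rw [hLHS] at h2
  have hq : ev SS TT d (etaV SS TT (X ⊕ ℕ)) (u.rename Sum.inl) =
      FreeM.map (FreeM.map Sum.inl) (ev SS TT d (etaV SS TT X) u) := by
    rw [ev_rename, ev_natural]
    apply congrArg (fun ρ => ev SS TT d ρ u)
    funext x
    show etaTS SS TT (X ⊕ ℕ) (Sum.inl x) =
      FreeM.map (FreeM.map Sum.inl) (etaTS SS TT X x)
    unfold etaTS
    rw [FreeM.map_unit, FreeM.map_unit]
  have hcl : clTS SS TT (tsRep SS TT (ev SS TT d (etaV SS TT (X ⊕ ℕ)) (u.rename Sum.inl)))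
      = clTS SS TT ((tsRep SS TT (ev SS TT d (etaV SS TT X) u)).rename
          (fun s => s.rename Sum.inl)) := by
    rw [clTS_tsRep, hq]
    have h0 : ev SS TT d (etaV SS TT X) u =
        clTS SS TT (tsRep SS TT (ev SS TT d (etaV SS TT X) u)) :=
      (clTS_tsRep SS TT _).symm
    conv_lhs => rw [h0]
    unfold clTS
    rw [FreeM.map_mk, Trm.rename_rename, Trm.rename_rename]
    exact congrArg FreeM.mk (congrArg
      (fun f => Trm.rename f (tsRep SS TT (ev SS TT d (etaV SS TT X) u)))
      (funext fun s => FreeM.map_mk Sum.inl s))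
  have h3 := Deriv.subst
    (Sum.elim (fun x => Trm.var (σ := SS.sig.sum TT.sig) x) (fun _ : ℕ => u))
    (sepUnique SS TT d hcl)
  have h4 : (sepTS ((tsRep SS TT (ev SS TT d (etaV SS TT X) u)).rename
        (fun s => s.rename Sum.inl))).bind
        (Sum.elim (fun x => Trm.var (σ := SS.sig.sum TT.sig) x) (fun _ : ℕ => u)) =
      sepTS (tsRep SS TT (ev SS TT d (etaV SS TT X) u)) := by
    unfold sepTS
    rw [Trm.inr_rename, Trm.rename_bind, Trm.bind_assoc]
    apply congrArg
    funext s
    show (Trm.inl (s.rename Sum.inl)).bind _ = Trm.inl s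
    rw [Trm.inl_rename, Trm.rename_bind]
    exact Trm.bind_var (Trm.inl s)
  rw [h4] at h3
  exact h2.trans h3

theorem mk_rep_theta (X : Type) (a : FreeM (SS.sig.sum TT.sig) (EUlam SS TT d) X) :
    FreeM.mk (rep SS TT (theta SS TT d X a)) = a := by
  induction a using Quot.ind with
  | _ u => exact (FreeM.sound (complete SS TT d u)).symm

end Final

/-- The composite monad `(TS, η^Tη^S, μ^Tμ^S ∘ TλS)` induced by a distributive
law `λ : ST ⇒ TS` is presented algebraically by the theory `𝕌^λ`: the free
algebra monad of `𝕌^λ` is isomorphic, as a monad, to `TS`. -/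
theorem Ulam_presents_composite_monad (SS TT : Thy) (d : DistLaw SS TT) :
    ∃ θ : ∀ X : Type, FreeM (SS.sig.sum TT.sig) (EUlam SS TT d) X → TSobj SS TT X,
      -- each component is a bijection
      (∀ X : Type, Function.Bijective (θ X)) ∧
      -- θ is natural
      (∀ (X Y : Type) (f : X → Y) (q : FreeM (SS.sig.sum TT.sig) (EUlam SS TT d) X),
          θ Y (FreeM.map f q) = FreeM.map (FreeM.map f) (θ X q)) ∧
      -- θ commutes with the units
      (∀ (X : Type) (x : X), θ X (FreeM.unit x) = etaTS SS TT X x) ∧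
      -- θ commutes with the multiplications
      (∀ (X : Type)
          (q : FreeM (SS.sig.sum TT.sig) (EUlam SS TT d)
              (FreeM (SS.sig.sum TT.sig) (EUlam SS TT d) X)),
          θ X (FreeM.mul q) =
            muTSd SS TT d X (θ (TSobj SS TT X) (FreeM.map (θ X) q))) := by
  refine ⟨theta SS TT d, fun X => ⟨?_, ?_⟩, theta_natural SS TT d, theta_unit SS TT d,
    theta_mul SS TT d⟩
  · intro a b hab
    rw [← mk_rep_theta SS TT d X a, ← mk_rep_theta SS TT d X b, hab]
  · intro q
    exact ⟨FreeM.mk (rep SS TT q), theta_phi SS TT d X q⟩
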